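/- arXiv:math/0509296 — 2 statements merged into one kernel-verified Lean document; each statement's English description precedes it below -/
import Mathlib

section
/- Let G be a finite connected simple graph with minimum degree δ(G) ≥ 3. Then for every vertex v of G and every m ≥ 1, |⟨v⟩_m| ≥ 3^m; that is, in L^{2m}(G) there are at least 3^m vertices associated with v. -/
open SimpleGraph

universe u

/-- The iterated line graph: `iterLineGraph G k` is `L^k(G)` together with its vertex type,
with `L^0(G) = G`. -/
def iterLineGraph {V : Type u} (G : SimpleGraph V) : ℕ → Σ W : Type u, SimpleGraph W
  | 0 => ⟨V, G⟩
  | k + 1 => ⟨(iterLineGraph G k).2.edgeSet, (iterLineGraph G k).2.lineGraph⟩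

/-- A vertex of `L^{k+1}(G)` is (definitionally) an edge of `L^k(G)`. -/
def iterVertexAsEdge {V : Type u} (G : SimpleGraph V) (k : ℕ)
    (x : (iterLineGraph G (k + 1)).1) : (iterLineGraph G k).2.edgeSet := x

/-- Given the family of maps `f k = f_{L^{2k}(G)} : V(L^{2k+2}(G)) → V(L^{2k}(G))`,
`cluster G f v m` is the set `⟨v⟩_m ⊆ V(L^{2m}(G))`, defined by `⟨v⟩_0 = {v}`,
`⟨v⟩_{m+1} = ⋃_{u ∈ ⟨v⟩_m} (f m)⁻¹(u)`.  (In particular `⟨v⟩_1 = f_G⁻¹(v)`.) -/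
def cluster {V : Type u} (G : SimpleGraph V)
    (f : ∀ k : ℕ, (iterLineGraph G (2 * k + 2)).1 → (iterLineGraph G (2 * k)).1)
    (v : V) : (m : ℕ) → Set ((iterLineGraph G (2 * m)).1)
  | 0 => ({v} : Set V)
  | m + 1 => f m ⁻¹' (cluster G f v m)


section Aux

open Set

/-- Every iterated line graph of a graph on a finite vertex type has a finite vertex type. -/
lemma finite_iter {V : Type u} [Fintype V] (G : SimpleGraph V) :
    ∀ k : ℕ, Finite (iterLineGraph G k).1
  | 0 => inferInstanceAs (Finite V)
  | k + 1 => by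
    have : Finite (iterLineGraph G k).1 := finite_iter G k
    exact inferInstanceAs (Finite (iterLineGraph G k).2.edgeSet)

/-- From a set with at least 3 elements, extract three distinct elements. -/
lemma exists_three_distinct {W : Type*} {s : Set W} (h : 3 ≤ s.ncard) :
    ∃ a ∈ s, ∃ b ∈ s, ∃ c ∈ s, a ≠ b ∧ a ≠ c ∧ b ≠ c := by
  obtain ⟨t, hts, ht⟩ := Set.exists_subset_card_eq h
  obtain ⟨a, b, c, hab, hac, hbc, rfl⟩ := Set.ncard_eq_three.mp ht
  exact ⟨a, hts (by simp), b, hts (by simp), c, hts (by simp), hab, hac, hbc⟩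

/-- A three-element set (given pairwise-distinct elements) has `ncard = 3`. -/
lemma ncard_triple {W : Type*} [Finite W] {a b c : W} (hab : a ≠ b) (hac : a ≠ c)
    (hbc : b ≠ c) : ({a, b, c} : Set W).ncard = 3 := by
  rw [Set.ncard_insert_of_notMem (by simp [hab, hac]),
    Set.ncard_pair hbc]

lemma sym2_eq_of_ne {W : Type*} {u a b : W} (hau : a ≠ u) (h : s(u, a) = s(u, b)) :
    a = b := by
  rw [Sym2.eq_iff] at h
  rcases h with ⟨-, h⟩ | ⟨h1, h2⟩
  · exact h
  · exact absurd h2 hau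

/-- Minimum degree at least 3 is preserved by the line graph. -/
lemma lineGraph_three_le_degree {W : Type u} [Finite W] (H : SimpleGraph W)
    (hdeg : ∀ w : W, 3 ≤ (H.neighborSet w).ncard) (e : H.edgeSet) :
    3 ≤ (H.lineGraph.neighborSet e).ncard := by
  obtain ⟨E, hE⟩ := e
  induction E with
  | _ x y =>
  rw [SimpleGraph.mem_edgeSet] at hE
  have hxy : x ≠ y := hE.ne
  -- pick two neighbors of x distinct from y
  obtain ⟨a, ha, b, hb, c, hc, hab, hac, hbc⟩ := exists_three_distinct (hdeg x)
  -- among a b c, at least two differ from y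
  have key : ∃ p q, p ≠ q ∧ p ≠ y ∧ q ≠ y ∧ H.Adj x p ∧ H.Adj x q := by
    by_cases hay : a = y
    · exact ⟨b, c, hbc, fun h => hab (hay.trans h.symm), fun h => hac (hay.trans h.symm),
        hb, hc⟩
    · by_cases hby : b = y
      · exact ⟨a, c, hac, hay, fun h => hbc (hby.trans h.symm), ha, hc⟩
      · exact ⟨a, b, hab, hay, hby, ha, hb⟩
  obtain ⟨p, q, hpq, hpy, hqy, hxp, hxq⟩ := key
  -- pick one neighbor of y distinct from x
  obtain ⟨a', ha', b', hb', c', hc', hab', hac', hbc'⟩ := exists_three_distinct (hdeg y)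
  have key' : ∃ r, r ≠ x ∧ H.Adj y r := by
    by_cases hax : a' = x
    · exact ⟨b', fun h => hab' (hax.trans h.symm), hb'⟩
    · exact ⟨a', hax, ha'⟩
  obtain ⟨r, hrx, hyr⟩ := key'
  have hxp' : x ≠ p := hxp.ne
  have hxq' : x ≠ q := hxq.ne
  have hyr' : y ≠ r := hyr.ne
  set E : H.edgeSet := ⟨s(x, y), hE⟩ with hEdef
  set E1 : H.edgeSet := ⟨s(x, p), hxp⟩ with hE1def
  set E2 : H.edgeSet := ⟨s(x, q), hxq⟩ with hE2def
  set E3 : H.edgeSet := ⟨s(y, r), hyr⟩ with hE3def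
  have hne1 : E1 ≠ E := by
    intro h
    exact hpy (sym2_eq_of_ne (Ne.symm hxp') (congrArg Subtype.val h))
  have hne2 : E2 ≠ E := by
    intro h
    exact hqy (sym2_eq_of_ne (Ne.symm hxq') (congrArg Subtype.val h))
  have hne3 : E3 ≠ E := by
    intro h
    have := congrArg Subtype.val h
    simp only [hE3def, hEdef] at this
    rw [Sym2.eq_iff] at this
    rcases this with ⟨h1, -⟩ | ⟨-, h2⟩
    · exact hxy h1.symm
    · exact hrx h2
  have h12 : E1 ≠ E2 := by
    intro h
    exact hpq (sym2_eq_of_ne (Ne.symm hxp') (congrArg Subtype.val h))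
  have h13 : E1 ≠ E3 := by
    intro h
    have := congrArg Subtype.val h
    simp only [hE1def, hE3def] at this
    rw [Sym2.eq_iff] at this
    rcases this with ⟨h1, -⟩ | ⟨-, h2⟩
    · exact hxy h1
    · exact hpy h2
  have h23 : E2 ≠ E3 := by
    intro h
    have := congrArg Subtype.val h
    simp only [hE2def, hE3def] at this
    rw [Sym2.eq_iff] at this
    rcases this with ⟨h1, -⟩ | ⟨-, h2⟩
    · exact hxy h1
    · exact hqy h2
  have hsub : ({E1, E2, E3} : Set H.edgeSet) ⊆ H.lineGraph.neighborSet E := by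
    intro z hz
    rcases hz with rfl | rfl | rfl
    · exact ⟨Ne.symm hne1, ⟨x, by simp [hE1def, hEdef]⟩⟩
    · exact ⟨Ne.symm hne2, ⟨x, by simp [hE2def, hEdef]⟩⟩
    · exact ⟨Ne.symm hne3, ⟨y, by simp [hE3def, hEdef]⟩⟩
  calc (3 : ℕ) = ({E1, E2, E3} : Set H.edgeSet).ncard := (ncard_triple h12 h13 h23).symm
    _ ≤ (H.lineGraph.neighborSet E).ncard := Set.ncard_le_ncard hsub (Set.toFinite _)

/-- Each fiber of a "common endpoint" map on `L^2(H)` has at least 3 elements. -/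
lemma fiber_three {W : Type u} [Finite W] (H : SimpleGraph W)
    (hdeg : ∀ w : W, 3 ≤ (H.neighborSet w).ncard)
    (g : H.lineGraph.edgeSet → W)
    (hg : ∀ z : H.lineGraph.edgeSet, ∀ e ∈ (z : Sym2 H.edgeSet), g z ∈ (e : Sym2 W))
    (u : W) : 3 ≤ (g ⁻¹' {u}).ncard := by
  obtain ⟨a, ha, b, hb, c, hc, hab, hac, hbc⟩ := exists_three_distinct (hdeg u)
  rw [SimpleGraph.mem_neighborSet] at ha hb hc
  set E1 : H.edgeSet := ⟨s(u, a), ha⟩ with hE1def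
  set E2 : H.edgeSet := ⟨s(u, b), hb⟩ with hE2def
  set E3 : H.edgeSet := ⟨s(u, c), hc⟩ with hE3def
  have h12 : E1 ≠ E2 := fun h => hab (sym2_eq_of_ne (Ne.symm ha.ne) (congrArg Subtype.val h))
  have h13 : E1 ≠ E3 := fun h => hac (sym2_eq_of_ne (Ne.symm ha.ne) (congrArg Subtype.val h))
  have h23 : E2 ≠ E3 := fun h => hbc (sym2_eq_of_ne (Ne.symm hb.ne) (congrArg Subtype.val h))
  have adj : ∀ (A B : H.edgeSet), A ≠ B → u ∈ (A : Sym2 W) → u ∈ (B : Sym2 W) →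
      s(A, B) ∈ H.lineGraph.edgeSet := by
    intro A B hAB hA hB
    rw [SimpleGraph.mem_edgeSet]
    exact ⟨hAB, ⟨u, hA, hB⟩⟩
  have hu1 : u ∈ (E1 : Sym2 W) := by simp [hE1def]
  have hu2 : u ∈ (E2 : Sym2 W) := by simp [hE2def]
  have hu3 : u ∈ (E3 : Sym2 W) := by simp [hE3def]
  set z12 : H.lineGraph.edgeSet := ⟨s(E1, E2), adj E1 E2 h12 hu1 hu2⟩ with hz12
  set z13 : H.lineGraph.edgeSet := ⟨s(E1, E3), adj E1 E3 h13 hu1 hu3⟩ with hz13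
  set z23 : H.lineGraph.edgeSet := ⟨s(E2, E3), adj E2 E3 h23 hu2 hu3⟩ with hz23
  -- each maps to u
  have gval : ∀ (z : H.lineGraph.edgeSet) (A B : H.edgeSet) (x y : W),
      (z : Sym2 H.edgeSet) = s(A, B) → (A : Sym2 W) = s(u, x) → (B : Sym2 W) = s(u, y) →
      x ≠ u → x ≠ y → g z = u := by
    intro z A B x y hz hA hB hxu hxy'
    have h1 : g z ∈ (A : Sym2 W) := hg z A (by rw [hz]; simp)
    have h2 : g z ∈ (B : Sym2 W) := hg z B (by rw [hz]; simp)
    rw [hA, Sym2.mem_iff] at h1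
    rw [hB, Sym2.mem_iff] at h2
    rcases h1 with h1 | h1
    · exact h1
    · rcases h2 with h2 | h2
      · exact absurd (h1.symm.trans h2) hxu
      · exact absurd (h1.symm.trans h2) hxy'
  have g12 : g z12 = u := gval z12 E1 E2 a b rfl rfl rfl ha.ne' hab
  have g13 : g z13 = u := gval z13 E1 E3 a c rfl rfl rfl ha.ne' hac
  have g23 : g z23 = u := gval z23 E2 E3 b c rfl rfl rfl hb.ne' hbc
  have d1 : z12 ≠ z13 := by
    intro h
    have := congrArg Subtype.val h
    simp only [hz12, hz13, Sym2.eq_iff] at this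
    rcases this with ⟨-, h2⟩ | ⟨h1, h2⟩
    · exact h23 h2
    · exact h13 h1
  have d2 : z12 ≠ z23 := by
    intro h
    have := congrArg Subtype.val h
    simp only [hz12, hz23, Sym2.eq_iff] at this
    rcases this with ⟨h1, -⟩ | ⟨h1, h2⟩
    · exact h12 h1
    · exact h13 h1
  have d3 : z13 ≠ z23 := by
    intro h
    have := congrArg Subtype.val h
    simp only [hz13, hz23, Sym2.eq_iff] at this
    rcases this with ⟨h1, -⟩ | ⟨h1, -⟩
    · exact h12 h1
    · exact h13 h1
  have hsub : ({z12, z13, z23} : Set H.lineGraph.edgeSet) ⊆ g ⁻¹' {u} := by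
    intro z hz
    rcases hz with rfl | rfl | rfl <;> simp [g12, g13, g23]
  have : Finite H.lineGraph.edgeSet := by
    have : Finite H.edgeSet := inferInstance
    infer_instance
  calc (3 : ℕ) = ({z12, z13, z23} : Set H.lineGraph.edgeSet).ncard :=
        (ncard_triple d1 d2 d3).symm
    _ ≤ (g ⁻¹' {u}).ncard := Set.ncard_le_ncard hsub (Set.toFinite _)

/-- Counting lemma: if each fiber over `S` has at least 3 elements, then the preimage of `S`
has at least `3 * |S|` elements. -/
lemma count_step {α : Type*} {β : Type*} [Finite α] [Finite β] (g : α → β) (S : Set β)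
    (h : ∀ u ∈ S, 3 ≤ (g ⁻¹' {u}).ncard) : 3 * S.ncard ≤ (g ⁻¹' S).ncard := by
  classical
  cases nonempty_fintype α
  cases nonempty_fintype β
  have key : ∀ x ∈ (g ⁻¹' S).toFinset, g x ∈ S.toFinset := by
    intro x hx
    simp only [Set.mem_toFinset] at hx ⊢
    exact hx
  have hcard := Finset.card_eq_sum_card_fiberwise key
  have hfib : ∀ b ∈ S.toFinset, 3 ≤ ((g ⁻¹' S).toFinset.filter fun x => g x = b).card := by
    intro b hb
    rw [Set.mem_toFinset] at hb
    have hsub : (g ⁻¹' {b}).toFinset ⊆ (g ⁻¹' S).toFinset.filter fun x => g x = b := by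
      intro x hx
      simp only [Set.mem_toFinset, Set.mem_preimage, Set.mem_singleton_iff] at hx
      refine Finset.mem_filter.mpr ⟨?_, hx⟩
      rw [Set.mem_toFinset, Set.mem_preimage, hx]
      exact hb
    calc (3 : ℕ) ≤ (g ⁻¹' {b}).ncard := h b hb
      _ = (g ⁻¹' {b}).toFinset.card := Set.ncard_eq_toFinset_card' _
      _ ≤ _ := Finset.card_le_card hsub
  calc 3 * S.ncard = 3 * S.toFinset.card := by rw [Set.ncard_eq_toFinset_card']
    _ = ∑ _b ∈ S.toFinset, 3 := by rw [Finset.sum_const, smul_eq_mul, mul_comm]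
    _ ≤ ∑ b ∈ S.toFinset, ((g ⁻¹' S).toFinset.filter fun x => g x = b).card :=
        Finset.sum_le_sum hfib
    _ = (g ⁻¹' S).toFinset.card := hcard.symm
    _ = (g ⁻¹' S).ncard := (Set.ncard_eq_toFinset_card' _).symm

end Aux

/-- If `G` is a finite connected simple graph with minimum degree `δ(G) ≥ 3`, then for every
vertex `v` of `G` and every `m ≥ 1` we have `|⟨v⟩_m| ≥ 3^m`; that is, in `L^{2m}(G)` there are
at least `3^m` vertices associated with `v`.  Here the maps `f k = f_{L^{2k}(G)}` send a vertex
of `L^{2k+2}(G)` (a pair of incident edges of `L^{2k}(G)`) to the common endpoint of these two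
edges, and `⟨v⟩_m ⊆ V(L^{2m}(G))` is as in the paper. -/
theorem cluster_card_ge_three_pow {V : Type u} [Fintype V] (G : SimpleGraph V)
    (hconn : G.Connected)
    (hdeg : ∀ v : V, 3 ≤ (G.neighborSet v).ncard)
    (f : ∀ k : ℕ, (iterLineGraph G (2 * k + 2)).1 → (iterLineGraph G (2 * k)).1)
    (hf : ∀ (k : ℕ) (z : (iterLineGraph G (2 * k + 2)).1),
      ∀ e ∈ (iterVertexAsEdge G (2 * k + 1) z : Sym2 (iterLineGraph G (2 * k + 1)).1),
        f k z ∈ (iterVertexAsEdge G (2 * k) e : Sym2 (iterLineGraph G (2 * k)).1)) :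
    ∀ v : V, ∀ m : ℕ, 1 ≤ m → 3 ^ m ≤ (cluster G f v m).ncard := by
  intro v m _
  -- min degree ≥ 3 at every level
  have degAll : ∀ k : ℕ, ∀ w : (iterLineGraph G k).1,
      3 ≤ ((iterLineGraph G k).2.neighborSet w).ncard := by
    intro k
    induction k with
    | zero => exact hdeg
    | succ k ih =>
      have : Finite (iterLineGraph G k).1 := finite_iter G k
      exact lineGraph_three_le_degree (iterLineGraph G k).2 ih
  suffices H : ∀ n : ℕ, 3 ^ n ≤ (cluster G f v n).ncard ∨ n = 0 by
    rcases H m with h | rfl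
    · exact h
    · omega
  intro n
  induction n with
  | zero => right; rfl
  | succ n ih =>
    left
    have hfin2n : Finite (iterLineGraph G (2 * n)).1 := finite_iter G (2 * n)
    have hfin2n2 : Finite (iterLineGraph G (2 * n + 2)).1 := finite_iter G (2 * n + 2)
    have hfiber : ∀ u : (iterLineGraph G (2 * n)).1, 3 ≤ ((f n) ⁻¹' {u}).ncard := by
      intro u
      exact fiber_three (iterLineGraph G (2 * n)).2 (degAll (2 * n)) (f n)
        (fun z e he => hf n z e he) u
    have hstep : 3 * (cluster G f v n).ncard ≤ (cluster G f v (n + 1)).ncard := by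
      have : cluster G f v (n + 1) = f n ⁻¹' (cluster G f v n) := rfl
      rw [this]
      exact count_step (f n) (cluster G f v n) (fun u _ => hfiber u)
    rcases ih with h | rfl
    · calc (3 : ℕ) ^ (n + 1) = 3 * 3 ^ n := by ring
        _ ≤ 3 * (cluster G f v n).ncard := Nat.mul_le_mul_left 3 h
        _ ≤ (cluster G f v (n + 1)).ncard := hstep
    · have h1 : (cluster G f v 0).ncard = 1 := Set.ncard_singleton v
      calc (3 : ℕ) ^ (0 + 1) = 3 * 1 := by norm_num
        _ = 3 * (cluster G f v 0).ncard := by rw [h1]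
        _ ≤ (cluster G f v (0 + 1)).ncard := hstep
end

section
/- If G is a finite connected simple graph which is not a path, not a cycle, and not the claw K_{1,3}, then there exists an integer k such that the k-th iterated line graph satisfies δ(L^k(G)) ≥ 3. -/
/-!
If every degree is at most two, a connected graph is a path or a cycle, so `G` has a vertex of
degree at least three. Connectedness passes to the line graph, where the edge `uv` has degree
`d(u) + d(v) - 2`; so does having a vertex of degree at least three, unless `G` is a claw, and a
line graph is never a claw.

The weight `3 · #{v | d(v) = 1} + 2 · #{v | d(v) = 2}` drops strictly under `L` while it is
positive. A vertex of degree one in `L(G)` is an edge joining a leaf to a vertex of degree two,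
and a vertex of degree two in `L(G)` is an edge at a leaf or an edge between two vertices of
degree two. There are at most as many edges at leaves as leaves, and, by the handshake lemma,
fewer edges between vertices of degree two than such vertices, because they do not form a union
of components. Once the weight is zero, every vertex has degree at least three.
-/

open SimpleGraph

universe u

theorem Fin.val_sub_eq_one_iff {n : ℕ} {u v : Fin n} (hn : 2 ≤ n) :
    (u - v).val = 1 ↔ u.val = v.val + 1 ∨ u.val = 0 ∧ v.val + 1 = n := by
  rcases le_or_gt v u with h | h
  · rw [Fin.coe_sub_iff_le.mpr h]
    omega
  · rw [Fin.coe_sub_iff_lt.mpr h]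
    omega

namespace SimpleGraph

variable {V W : Type*} {G : SimpleGraph V} {S : Set V} {a b u v w x y z : V}

/-- The degree as the `ncard` of the neighbour set, which needs no `Fintype` instances on the
iterated line graphs. It is `degree` when `V` is finite (`ncard` of an infinite set is `0`). -/
noncomputable def ncardDegree (G : SimpleGraph V) (v : V) : ℕ := (G.neighborSet v).ncard

theorem Connected.eq_univ_of_adj_mem (hconn : G.Connected) (hS : S.Nonempty)
    (hadj : ∀ ⦃a b⦄, G.Adj a b → a ∈ S → b ∈ S) : S = Set.univ := by
  obtain ⟨a, ha⟩ := hS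
  refine Set.eq_univ_of_forall fun b => by_contra fun hb => ?_
  obtain ⟨d, -, hd, hd'⟩ := (hconn a b).some.exists_boundary_dart S ha hb
  exact hd' (hadj d.adj hd)

theorem nonempty_iso_of_bijective {H : SimpleGraph W} (f : W → V) (hf : f.Bijective)
    (hadj : ∀ a b, G.Adj (f a) (f b) ↔ H.Adj a b) : Nonempty (G ≃g H) :=
  ⟨(RelIso.mk (Equiv.ofBijective f hf) (hadj _ _)).symm⟩

theorem ncardDegree_pos_of_adj [Finite V] (h : G.Adj v w) : 0 < G.ncardDegree v :=
  (Set.ncard_pos (Set.toFinite _)).mpr ⟨w, h⟩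

theorem Connected.ncardDegree_pos [Finite V] [Nontrivial V] (hconn : G.Connected) (v : V) :
    0 < G.ncardDegree v := by
  obtain ⟨w, hw⟩ := exists_ne v
  obtain ⟨d, -, rfl, hd⟩ := (hconn v w).some.exists_boundary_dart {v} rfl hw
  exact ncardDegree_pos_of_adj d.adj

theorem eq_of_adj_of_ncardDegree_le_one [Finite V] (hv : G.ncardDegree v ≤ 1)
    (hx : G.Adj v x) (hy : G.Adj v y) : x = y :=
  (Set.ncard_le_one (Set.toFinite _)).mp hv x hx y hy

theorem eq_or_eq_of_adj_of_ncardDegree_le_two [Finite V] (hv : G.ncardDegree v ≤ 2)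
    (hx : G.Adj v x) (hy : G.Adj v y) (hxy : x ≠ y) (hz : G.Adj v z) : z = x ∨ z = y := by
  have hsub : ({x, y} : Set V) ⊆ G.neighborSet v := by
    rintro _ (rfl | rfl) <;> assumption
  have heq := Set.eq_of_subset_of_ncard_le hsub (by rwa [Set.ncard_pair hxy])
  exact (heq.symm ▸ hz : z ∈ ({x, y} : Set V))

theorem ncard_incidenceSet (G : SimpleGraph V) (v : V) :
    (G.incidenceSet v).ncard = G.ncardDegree v := by
  classical
  exact Nat.card_congr (G.incidenceSetEquivNeighborSet v)

theorem image_val_lineGraph_neighborSet {e : G.edgeSet} (he : (e : Sym2 V) = s(u, v)) :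
    Subtype.val '' G.lineGraph.neighborSet e =
      (G.incidenceSet u ∪ G.incidenceSet v) \ {s(u, v)} := by
  ext f
  constructor
  · rintro ⟨f, hadj, rfl⟩
    obtain ⟨hne, x, hxe, hxf⟩ := lineGraph_adj_iff_exists.mp hadj
    refine ⟨?_, fun hf => hne (Subtype.ext (he.trans hf.symm))⟩
    rw [he, Sym2.mem_iff] at hxe
    rcases hxe with rfl | rfl
    exacts [Or.inl ⟨f.2, hxf⟩, Or.inr ⟨f.2, hxf⟩]
  · rintro ⟨hf, hne⟩
    have hfE : f ∈ G.edgeSet := hf.elim (·.1) (·.1)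
    refine ⟨⟨f, hfE⟩, lineGraph_adj_iff_exists.mpr ⟨fun h => hne ?_, ?_⟩, rfl⟩
    · rw [← he, h, Set.mem_singleton_iff]
    · rw [he]
      rcases hf with ⟨-, hu⟩ | ⟨-, hv⟩
      exacts [⟨u, Sym2.mem_mk_left u v, hu⟩, ⟨v, Sym2.mem_mk_right u v, hv⟩]

theorem ncardDegree_lineGraph_add_two [Finite V] {e : G.edgeSet} (he : (e : Sym2 V) = s(u, v)) :
    G.lineGraph.ncardDegree e + 2 = G.ncardDegree u + G.ncardDegree v := by
  have hadj : G.Adj u v := by simpa [he] using e.2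
  have hmem : s(u, v) ∈ G.incidenceSet u ∪ G.incidenceSet v :=
    Or.inl ⟨hadj, Sym2.mem_mk_left u v⟩
  have hunion := Set.ncard_union_add_ncard_inter (G.incidenceSet u) (G.incidenceSet v)
  rw [G.incidenceSet_inter_incidenceSet_of_adj hadj, Set.ncard_singleton, ncard_incidenceSet,
    ncard_incidenceSet] at hunion
  rw [ncardDegree, ← Set.ncard_image_of_injective _ Subtype.val_injective,
    image_val_lineGraph_neighborSet he, Set.ncard_sdiff_singleton_of_mem hmem]
  have := (Set.ncard_pos (Set.toFinite _)).mpr ⟨_, hmem⟩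
  omega

theorem lineGraph_reachable_of_mem {e f : G.edgeSet} (he : x ∈ (e : Sym2 V))
    (hf : x ∈ (f : Sym2 V)) : G.lineGraph.Reachable e f := by
  by_cases hef : e = f
  · exact hef ▸ Reachable.refl e
  · exact (lineGraph_adj_iff_exists.mpr ⟨hef, x, he, hf⟩).reachable

theorem Connected.lineGraph (hconn : G.Connected) (hE : G.edgeSet.Nonempty) :
    G.lineGraph.Connected := by
  have key : ∀ {a b : V} (p : G.Walk a b) (e f : G.edgeSet), a ∈ (e : Sym2 V) →
      b ∈ (f : Sym2 V) → G.lineGraph.Reachable e f := by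
    intro a b p
    induction p with
    | nil => exact fun e f => lineGraph_reachable_of_mem
    | @cons a c b hadj q ih =>
      intro e f ha hb
      exact (lineGraph_reachable_of_mem ha (Sym2.mem_mk_left a c)).trans
        (ih ⟨s(a, c), hadj⟩ f (Sym2.mem_mk_right a c) hb)
  obtain ⟨e₀, he₀⟩ := hE
  refine (connected_iff _).mpr ⟨fun e f => ?_, ⟨⟨e₀, he₀⟩⟩⟩
  rcases e with ⟨⟨a, a'⟩, he⟩
  rcases f with ⟨⟨b, b'⟩, hf⟩
  exact key (hconn a b).some _ _ (Sym2.mem_mk_left a a') (Sym2.mem_mk_left b b')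

theorem lineGraph_not_iso_claw (G : SimpleGraph V) :
    ¬ Nonempty (G.lineGraph ≃g completeBipartiteGraph (Fin 1) (Fin 3)) := by
  classical
  rintro ⟨φ⟩
  have hcenter : ∀ i, G.lineGraph.Adj (φ.symm (.inl 0)) (φ.symm (.inr i)) := fun i =>
    φ.symm.map_rel_iff.mpr (by simp [completeBipartiteGraph])
  have hleaves : ∀ i j, ¬ G.lineGraph.Adj (φ.symm (.inr i)) (φ.symm (.inr j)) :=
    fun i j h => by simpa [completeBipartiteGraph] using φ.symm.map_rel_iff.mp h
  rcases hc : φ.symm (.inl 0) with ⟨⟨u, v⟩, _⟩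
  have huv : ∀ i, u ∈ (φ.symm (.inr i) : Sym2 V) ∨ v ∈ (φ.symm (.inr i) : Sym2 V) := by
    intro i
    obtain ⟨-, x, hx, hxi⟩ := lineGraph_adj_iff_exists.mp (hcenter i)
    simp only [hc, Sym2.mem_iff] at hx
    rcases hx with rfl | rfl
    exacts [Or.inl hxi, Or.inr hxi]
  -- two of the three leaf edges meet the centre edge in the same endpoint
  obtain ⟨i, j, hij, hside⟩ := Fintype.exists_ne_map_eq_of_card_lt
    (fun i => decide (u ∈ (φ.symm (.inr i) : Sym2 V))) (by simp)
  have hne : φ.symm (.inr i) ≠ φ.symm (.inr j) := fun h =>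
    hij (Sum.inr_injective (φ.symm.injective h))
  refine hleaves i j (lineGraph_adj_iff_exists.mpr ⟨hne, ?_⟩)
  by_cases hu : u ∈ (φ.symm (.inr i) : Sym2 V)
  · exact ⟨u, hu, by simpa [hu] using hside⟩
  · have hu' : u ∉ (φ.symm (.inr j) : Sym2 V) := by simpa [hu] using hside
    exact ⟨v, (huv i).resolve_left hu, (huv j).resolve_left hu'⟩

theorem Connected.nonempty_iso_claw [Finite V] (hconn : G.Connected) (hw : G.ncardDegree w = 3)
    (hleaf : ∀ x, G.Adj w x → G.ncardDegree x = 1) :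
    Nonempty (G ≃g completeBipartiteGraph (Fin 1) (Fin 3)) := by
  let e : Fin 3 ≃ G.neighborSet w := (Finite.equivFinOfCardEq hw).symm
  let f : Fin 1 ⊕ Fin 3 → V := Sum.elim (fun _ => w) (fun i => e i)
  have hwe : ∀ i, G.Adj w (e i) := fun i => (e i).2
  have hnonadj : ∀ i j, ¬ G.Adj (e i) (e j) := fun i j h =>
    (hwe j).ne (eq_of_adj_of_ncardDegree_le_one (hleaf _ (hwe i)).le (hwe i).symm h)
  have hspan : insert w (G.neighborSet w) = Set.univ := by
    refine hconn.eq_univ_of_adj_mem ⟨w, Set.mem_insert w _⟩ ?_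
    rintro a b hab (rfl | ha)
    · exact Or.inr hab
    · exact Or.inl (eq_of_adj_of_ncardDegree_le_one (hleaf a ha).le hab (G.adj_symm ha))
  refine nonempty_iso_of_bijective f ⟨?_, fun x => ?_⟩ ?_
  · rintro (_ | i) (_ | j) h
    · exact congrArg Sum.inl (Subsingleton.elim _ _)
    · exact absurd h (hwe j).ne
    · exact absurd h (hwe i).ne'
    · exact congrArg Sum.inr (e.injective (Subtype.ext h))
  · rcases (hspan ▸ Set.mem_univ x : x ∈ insert w (G.neighborSet w)) with rfl | hx
    · exact ⟨.inl 0, rfl⟩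
    · exact ⟨.inr (e.symm ⟨x, hx⟩), by simp [f]⟩
  · rintro (_ | i) (_ | j) <;>
      simp [f, completeBipartiteGraph, hwe, fun i => (hwe i).symm, hnonadj]

theorem exists_three_le_ncardDegree_lineGraph [Finite V] (hconn : G.Connected)
    (hw : 3 ≤ G.ncardDegree w)
    (hclaw : ¬ Nonempty (G ≃g completeBipartiteGraph (Fin 1) (Fin 3))) :
    ∃ e : G.edgeSet, 3 ≤ G.lineGraph.ncardDegree e := by
  by_contra! hsmall
  have hsum : ∀ x, G.Adj w x → G.ncardDegree w + G.ncardDegree x ≤ 4 := fun x hx => by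
    have := ncardDegree_lineGraph_add_two (e := ⟨s(w, x), hx⟩) rfl
    have := hsmall ⟨s(w, x), hx⟩
    omega
  obtain ⟨x, hx⟩ : (G.neighborSet w).Nonempty :=
    (Set.ncard_pos (Set.toFinite _)).mp (by unfold ncardDegree at hw; omega)
  refine hclaw (hconn.nonempty_iso_claw (w := w) ?_ fun y hy => ?_)
  · have := hsum x hx
    have := ncardDegree_pos_of_adj (G.adj_symm hx)
    omega
  · have := hsum y hy
    have := ncardDegree_pos_of_adj (G.adj_symm hy)
    omega

theorem ncard_edges_incident_to_degree_one_le [Finite V] :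
    {e ∈ G.edgeSet | ∃ x ∈ e, G.ncardDegree x = 1}.ncard ≤
      {v | G.ncardDegree v = 1}.ncard := by
  have hsub : {e ∈ G.edgeSet | ∃ x ∈ e, G.ncardDegree x = 1} ⊆
      ⋃ x ∈ {v | G.ncardDegree v = 1}, G.incidenceSet x := by
    rintro e ⟨he, x, hx, hdeg⟩
    exact Set.mem_biUnion hdeg ⟨he, hx⟩
  calc _ ≤ _ := Set.ncard_le_ncard hsub
    _ ≤ ∑ᶠ x ∈ {v | G.ncardDegree v = 1}, (G.incidenceSet x).ncard :=
      (Set.toFinite _).ncard_biUnion_le _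
    _ = ∑ᶠ x ∈ {v | G.ncardDegree v = 1}, 1 :=
      finsum_mem_congr rfl fun x hx => (ncard_incidenceSet G x).trans hx
    _ = _ := finsum_one

theorem two_mul_ncard_edges_within_lt [Finite V] {k : ℕ} (hS : ∀ v ∈ S, G.ncardDegree v ≤ k)
    (hv : v ∈ S) (hx : G.Adj v x) (hxS : x ∉ S) :
    2 * {e ∈ G.edgeSet | ∀ y ∈ e, y ∈ S}.ncard < k * S.ncard := by
  classical
  have := Fintype.ofFinite V
  set T := {e ∈ G.edgeSet | ∀ y ∈ e, y ∈ S}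
  set H := fromEdgeSet T
  have hHE : H.edgeSet = T := by
    rw [edgeSet_fromEdgeSet, sdiff_eq_left, Set.disjoint_left]
    exact fun e he hdiag => G.not_isDiag_of_mem_edgeSet he.1 hdiag
  have hHdeg : ∀ y, H.degree y = (H.neighborSet y).ncard := fun y => by
    rw [← card_neighborSet_eq_degree, ← Nat.card_eq_fintype_card, Nat.card_coe_set_eq]
  have hHG : ∀ y, H.neighborSet y ⊆ G.neighborSet y := fun y z h =>
    (fromEdgeSet_adj T).mp h |>.1.1
  have hHS : ∀ y ∉ S, H.degree y = 0 := fun y hy => by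
    rw [hHdeg, Set.ncard_eq_zero (Set.toFinite _)]
    exact Set.eq_empty_of_forall_notMem fun z h =>
      hy (((fromEdgeSet_adj T).mp h).1.2 y (Sym2.mem_mk_left y z))
  have hvx : H.degree v < G.ncardDegree v := by
    refine hHdeg v ▸ Set.ncard_lt_ncard ⟨hHG v, fun h => hxS ?_⟩
    exact ((fromEdgeSet_adj T).mp (h hx)).1.2 x (Sym2.mem_mk_right v x)
  calc 2 * T.ncard = ∑ y, H.degree y := by
        rw [sum_degrees_eq_twice_card_edges, ← Set.ncard_coe_finset, coe_edgeFinset, hHE]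
    _ = ∑ y ∈ S.toFinset, H.degree y :=
        (Finset.sum_subset (Finset.subset_univ _) fun y _ hy => hHS y (by simpa using hy)).symm
    _ < ∑ y ∈ S.toFinset, k := by
        refine Finset.sum_lt_sum (fun y hy => ?_) ⟨v, by simpa using hv, by
          have := hS v hv; omega⟩
        rw [hHdeg]
        exact (Set.ncard_le_ncard (hHG y)).trans (hS y (by simpa using hy))
    _ = k * S.ncard := by
        rw [Finset.sum_const, smul_eq_mul, mul_comm, Set.ncard_eq_toFinset_card']

theorem ncardDegree_of_lineGraph_ncardDegree_eq_one [Finite V] {e : G.edgeSet}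
    (he : G.lineGraph.ncardDegree e = 1) :
    (∃ x ∈ (e : Sym2 V), G.ncardDegree x = 1) ∧
      ∃ y ∈ (e : Sym2 V), G.ncardDegree y = 2 := by
  rcases e with ⟨⟨u, v⟩, huv⟩
  have hsum := ncardDegree_lineGraph_add_two (e := ⟨_, huv⟩) rfl
  have hu : 0 < G.ncardDegree u := ncardDegree_pos_of_adj huv
  have hv : 0 < G.ncardDegree v := ncardDegree_pos_of_adj (G.adj_symm huv)
  by_cases hu1 : G.ncardDegree u = 1
  · exact ⟨⟨u, Sym2.mem_mk_left u v, hu1⟩, v, Sym2.mem_mk_right u v, by omega⟩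
  · exact ⟨⟨v, Sym2.mem_mk_right u v, by omega⟩, u, Sym2.mem_mk_left u v, by omega⟩

theorem ncardDegree_of_lineGraph_ncardDegree_eq_two [Finite V] {e : G.edgeSet}
    (he : G.lineGraph.ncardDegree e = 2) :
    (∃ x ∈ (e : Sym2 V), G.ncardDegree x = 1) ∨
      ∀ y ∈ (e : Sym2 V), G.ncardDegree y = 2 := by
  rcases e with ⟨⟨u, v⟩, huv⟩
  have hsum := ncardDegree_lineGraph_add_two (e := ⟨_, huv⟩) rfl
  have hu : 0 < G.ncardDegree u := ncardDegree_pos_of_adj huv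
  have hv : 0 < G.ncardDegree v := ncardDegree_pos_of_adj (G.adj_symm huv)
  by_cases hu1 : G.ncardDegree u = 1
  · exact .inl ⟨u, Sym2.mem_mk_left u v, hu1⟩
  by_cases hv1 : G.ncardDegree v = 1
  · exact .inl ⟨v, Sym2.mem_mk_right u v, hv1⟩
  refine .inr fun y hy => ?_
  rcases Sym2.mem_iff.mp hy with rfl | rfl <;> omega

theorem ncard_lineGraph_ncardDegree_eq_one_le [Finite V] :
    {e | G.lineGraph.ncardDegree e = 1}.ncard ≤
      {e ∈ G.edgeSet | ∃ x ∈ e, G.ncardDegree x = 1}.ncard :=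
  Set.ncard_le_ncard_of_injOn Subtype.val
    (fun e he => ⟨e.2, (ncardDegree_of_lineGraph_ncardDegree_eq_one he).1⟩)
    Subtype.val_injective.injOn

theorem ncard_lineGraph_ncardDegree_eq_one_add_ncard_eq_two_le [Finite V] :
    {e | G.lineGraph.ncardDegree e = 1}.ncard + {e | G.lineGraph.ncardDegree e = 2}.ncard ≤
      {e ∈ G.edgeSet | ∃ x ∈ e, G.ncardDegree x = 1}.ncard +
        {e ∈ G.edgeSet | ∀ y ∈ e, G.ncardDegree y = 2}.ncard := by
  have hdisj : Disjoint {e | G.lineGraph.ncardDegree e = 1} {e | G.lineGraph.ncardDegree e = 2} :=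
    Set.disjoint_left.mpr fun e (h₁ : _ = 1) (h₂ : _ = 2) => by omega
  rw [← Set.ncard_union_eq hdisj]
  refine (Set.ncard_le_ncard_of_injOn Subtype.val (fun e he => ?_)
    Subtype.val_injective.injOn).trans (Set.ncard_union_le _ _)
  rcases he with he | he
  · exact .inl ⟨e.2, (ncardDegree_of_lineGraph_ncardDegree_eq_one he).1⟩
  · exact (ncardDegree_of_lineGraph_ncardDegree_eq_two he).imp (⟨e.2, ·⟩) (⟨e.2, ·⟩)

noncomputable def lowDegreeWeight (G : SimpleGraph V) : ℕ :=
  3 * {v | G.ncardDegree v = 1}.ncard + 2 * {v | G.ncardDegree v = 2}.ncard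

theorem lowDegreeWeight_lineGraph_lt [Finite V] (hconn : G.Connected) (hw : 3 ≤ G.ncardDegree w)
    (hpos : 0 < G.lowDegreeWeight) : G.lineGraph.lowDegreeWeight < G.lowDegreeWeight := by
  unfold lowDegreeWeight at hpos ⊢
  have hA := ncard_edges_incident_to_degree_one_le (G := G)
  have hL₁ := ncard_lineGraph_ncardDegree_eq_one_le (G := G)
  have hL₁₂ := ncard_lineGraph_ncardDegree_eq_one_add_ncard_eq_two_le (G := G)
  set D₂ := {v | G.ncardDegree v = 2}
  set T := {e ∈ G.edgeSet | ∀ y ∈ e, G.ncardDegree y = 2}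
  by_cases hD₂ : D₂.Nonempty
  · -- `D₂` is not a union of components, as `w ∉ D₂`
    obtain ⟨v, hv, x, hx, hxD⟩ : ∃ v ∈ D₂, ∃ x, G.Adj v x ∧ x ∉ D₂ := by
      by_contra! hclosed
      have hwD : w ∈ D₂ :=
        hconn.eq_univ_of_adj_mem hD₂ (fun a b hab ha => hclosed a ha b hab) ▸ Set.mem_univ w
      exact absurd (show G.ncardDegree w = 2 from hwD) (by omega)
    have hT : 2 * T.ncard < 2 * D₂.ncard :=
      two_mul_ncard_edges_within_lt (fun v hv => hv.le) hv hx hxD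
    omega
  · have hL₁0 : {e | G.lineGraph.ncardDegree e = 1}.ncard = 0 :=
      (Set.ncard_eq_zero (Set.toFinite _)).mpr <| Set.eq_empty_of_forall_notMem fun e he =>
        hD₂ <| (ncardDegree_of_lineGraph_ncardDegree_eq_one he).2.imp fun y hy => hy.2
    have hT0 : T.ncard = 0 :=
      (Set.ncard_eq_zero (Set.toFinite _)).mpr <| Set.eq_empty_of_forall_notMem fun e he => by
        rcases e with ⟨u, v⟩
        exact hD₂ ⟨u, he.2 u (Sym2.mem_mk_left u v)⟩
    rw [Set.not_nonempty_iff_eq_empty.mp hD₂, Set.ncard_empty] at hpos ⊢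
    omega

theorem three_le_ncardDegree_of_lowDegreeWeight_eq_zero [Finite V] (h : G.lowDegreeWeight = 0)
    (hv : 0 < G.ncardDegree v) : 3 ≤ G.ncardDegree v := by
  unfold lowDegreeWeight at h
  have h₁ := (Set.ncard_eq_zero (Set.toFinite _)).mp
    (show {v | G.ncardDegree v = 1}.ncard = 0 by omega)
  have h₂ := (Set.ncard_eq_zero (Set.toFinite _)).mp
    (show {v | G.ncardDegree v = 2}.ncard = 0 by omega)
  have hv₁ : G.ncardDegree v ≠ 1 := fun hv₁ => (h₁ ▸ hv₁ : v ∈ (∅ : Set V))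
  have hv₂ : G.ncardDegree v ≠ 2 := fun hv₂ => (h₂ ▸ hv₂ : v ∈ (∅ : Set V))
  omega

def Walk.IsLongestPath (p : G.Walk a b) : Prop :=
  p.IsPath ∧ ∀ (a' b' : V) (q : G.Walk a' b'), q.IsPath → q.length ≤ p.length

theorem exists_isLongestPath [Finite V] [Nonempty V] (G : SimpleGraph V) :
    ∃ (a b : V) (p : G.Walk a b), p.IsLongestPath := by
  classical
  have := Fintype.ofFinite V
  obtain ⟨v⟩ := ‹Nonempty V›
  let P : Set ℕ := {l | ∃ (a b : V) (p : G.Walk a b), p.IsPath ∧ p.length = l}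
  have hbdd : BddAbove P :=
    ⟨Fintype.card V, by rintro _ ⟨a, b, p, hp, rfl⟩; exact hp.length_lt.le⟩
  have hne : P.Nonempty := ⟨0, v, v, .nil, .nil, rfl⟩
  obtain ⟨a, b, p, hp, hlen⟩ := Nat.sSup_mem hne hbdd
  exact ⟨a, b, p, hp, fun a' b' q hq => hlen ▸ le_csSup hbdd ⟨a', b', q, hq, rfl⟩⟩

namespace Walk

variable {p : G.Walk a b}

theorem IsLongestPath.reverse (hp : p.IsLongestPath) : p.reverse.IsLongestPath :=
  ⟨hp.1.reverse, fun a' b' q hq => p.length_reverse ▸ hp.2 a' b' q hq⟩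

theorem IsLongestPath.mem_support_of_adj_start (hp : p.IsLongestPath) (h : G.Adj a x) :
    x ∈ p.support := by
  by_contra hx
  have := hp.2 _ _ (cons (G.adj_symm h) p) (hp.1.cons hx)
  simp at this

theorem IsLongestPath.mem_support_of_adj_end (hp : p.IsLongestPath) (h : G.Adj b x) :
    x ∈ p.support := by
  simpa using hp.reverse.mem_support_of_adj_start h

theorem IsPath.eq_getVert_pred_or_succ [Finite V] (hp : p.IsPath) {i : ℕ} (h0 : 0 < i)
    (hi : i < p.length) (hdeg : G.ncardDegree (p.getVert i) ≤ 2) (h : G.Adj (p.getVert i) x) :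
    x = p.getVert (i - 1) ∨ x = p.getVert (i + 1) := by
  have hpred : G.Adj (p.getVert i) (p.getVert (i - 1)) := by
    have := p.adj_getVert_succ (i := i - 1) (by omega)
    rw [Nat.sub_add_cancel h0] at this
    exact this.symm
  refine eq_or_eq_of_adj_of_ncardDegree_le_two hdeg hpred (p.adj_getVert_succ hi) (fun heq => ?_)
    h
  have := hp.getVert_injOn (show i - 1 ≤ p.length by omega) (show i + 1 ≤ p.length by omega) heq
  omega

theorem IsPath.succ_eq_or_eq_succ_of_adj_getVert [Finite V] (hp : p.IsPath) {i j : ℕ}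
    (h0 : 0 < i) (hi : i < p.length) (hj : j ≤ p.length)
    (hdeg : G.ncardDegree (p.getVert i) ≤ 2) (h : G.Adj (p.getVert i) (p.getVert j)) :
    i + 1 = j ∨ j + 1 = i := by
  rcases hp.eq_getVert_pred_or_succ h0 hi hdeg h with heq | heq
  · have := hp.getVert_injOn hj (show i - 1 ≤ p.length by omega) heq
    omega
  · have := hp.getVert_injOn hj (show i + 1 ≤ p.length by omega) heq
    omega

theorem IsPath.adj_getVert_iff [Finite V] (hdeg : ∀ v, G.ncardDegree v ≤ 2)
    (hp : p.IsPath) {i j : ℕ} (hi : i ≤ p.length) (hj : j ≤ p.length) :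
    G.Adj (p.getVert i) (p.getVert j) ↔ i + 1 = j ∨ j + 1 = i ∨
      G.Adj a b ∧ (i = 0 ∧ j = p.length ∨ i = p.length ∧ j = 0) := by
  constructor
  · intro h
    by_cases hi' : 0 < i ∧ i < p.length
    · exact (hp.succ_eq_or_eq_succ_of_adj_getVert hi'.1 hi'.2 hj (hdeg _) h).imp_right .inl
    by_cases hj' : 0 < j ∧ j < p.length
    · exact (hp.succ_eq_or_eq_succ_of_adj_getVert hj'.1 hj'.2 hi (hdeg _) h.symm).symm.imp_right
        .inl
    have hij : i ≠ j := fun hij => h.ne (congrArg p.getVert hij)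
    have hends : i = 0 ∧ j = p.length ∨ i = p.length ∧ j = 0 := by omega
    refine .inr (.inr ⟨?_, hends⟩)
    rcases hends with ⟨rfl, rfl⟩ | ⟨rfl, rfl⟩
    · simpa using h
    · simpa using h.symm
  · rintro (rfl | rfl | ⟨hab, ⟨rfl, rfl⟩ | ⟨rfl, rfl⟩⟩)
    · exact p.adj_getVert_succ (by omega)
    · exact (p.adj_getVert_succ (by omega)).symm
    · simpa using hab
    · simpa using hab.symm

end Walk

theorem Connected.mem_support_of_isLongestPath [Finite V] (hconn : G.Connected)
    (hdeg : ∀ v, G.ncardDegree v ≤ 2) {p : G.Walk a b} (hp : p.IsLongestPath) (v : V) :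
    v ∈ p.support := by
  suffices {v | v ∈ p.support} = Set.univ from Set.eq_univ_iff_forall.mp this v
  refine hconn.eq_univ_of_adj_mem ⟨a, p.start_mem_support⟩ fun x y hxy hx => ?_
  obtain ⟨i, rfl, hi⟩ := Walk.mem_support_iff_exists_getVert.mp hx
  rcases Nat.eq_zero_or_pos i with rfl | h0
  · exact hp.mem_support_of_adj_start (by simpa using hxy)
  rcases hi.lt_or_eq with hi | rfl
  · rcases hp.1.eq_getVert_pred_or_succ h0 hi (hdeg _) hxy with rfl | rfl <;>
      exact p.getVert_mem_support _
  · exact hp.mem_support_of_adj_end (by simpa using hxy)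

theorem Connected.nonempty_iso_pathGraph_or_cycleGraph [Finite V] (hconn : G.Connected)
    (hdeg : ∀ v, G.ncardDegree v ≤ 2) :
    (∃ n, Nonempty (G ≃g pathGraph n)) ∨ ∃ n, Nonempty (G ≃g cycleGraph n) := by
  have := hconn.nonempty
  obtain ⟨a, b, p, hp⟩ := G.exists_isLongestPath
  let f : Fin (p.length + 1) → V := fun i => p.getVert i
  have hf : f.Bijective := by
    refine ⟨fun i j h => Fin.ext ?_, fun v => ?_⟩
    · exact hp.1.getVert_injOn (Nat.le_of_lt_succ i.2) (Nat.le_of_lt_succ j.2) h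
    · obtain ⟨i, rfl, hi⟩ :=
        Walk.mem_support_iff_exists_getVert.mp (hconn.mem_support_of_isLongestPath hdeg hp v)
      exact ⟨⟨i, by omega⟩, rfl⟩
  have hadj (i j : Fin (p.length + 1)) :=
    hp.1.adj_getVert_iff hdeg (Nat.le_of_lt_succ i.2) (Nat.le_of_lt_succ j.2)
  by_cases hcyc : G.Adj a b ∧ 2 ≤ p.length
  · refine .inr ⟨p.length + 1, nonempty_iso_of_bijective f hf fun i j => ?_⟩
    rw [hadj, cycleGraph_adj', Fin.val_sub_eq_one_iff (by omega),
      Fin.val_sub_eq_one_iff (by omega)]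
    simp only [hcyc.1, true_and]
    omega
  · refine .inl ⟨p.length + 1, nonempty_iso_of_bijective f hf fun i j => ?_⟩
    rw [hadj, pathGraph_adj]
    by_cases hab : G.Adj a b
    · have : p.length = 1 := by
        have := mt p.eq_of_length_eq_zero hab.ne
        grind
      simp only [hab, true_and]
      omega
    · simp only [hab, false_and, or_false]

end SimpleGraph

theorem iterLineGraph_succ' {V : Type u} (G : SimpleGraph V) (k : ℕ) :
    iterLineGraph G (k + 1) = iterLineGraph G.lineGraph k := by
  induction k with
  | zero => rfl
  | succ k ih => rw [iterLineGraph, ih, iterLineGraph]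

theorem SimpleGraph.Connected.exists_iterLineGraph_three_le_ncardDegree {V : Type u} [Finite V]
    {G : SimpleGraph V} (hconn : G.Connected) (hw : ∃ w, 3 ≤ G.ncardDegree w)
    (hclaw : ¬ Nonempty (G ≃g completeBipartiteGraph (Fin 1) (Fin 3))) :
    ∃ k, ∀ w, 3 ≤ (iterLineGraph G k).2.ncardDegree w := by
  induction hn : G.lowDegreeWeight using Nat.strong_induction_on generalizing V with
  | _ n ih =>
  obtain ⟨w, hw⟩ := hw
  obtain ⟨x, hx⟩ : (G.neighborSet w).Nonempty :=
    (Set.ncard_pos (Set.toFinite _)).mp (by unfold ncardDegree at hw; omega)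
  rcases Nat.eq_zero_or_pos n with rfl | hpos
  · have : Nontrivial V := nontrivial_of_ne w x hx.ne
    exact ⟨0, fun v => show 3 ≤ G.ncardDegree v from
      three_le_ncardDegree_of_lowDegreeWeight_eq_zero hn (hconn.ncardDegree_pos v)⟩
  · obtain ⟨k, hk⟩ := ih _ (hn ▸ lowDegreeWeight_lineGraph_lt hconn hw (hn ▸ hpos))
      (hconn.lineGraph ⟨s(w, x), hx⟩) (exists_three_le_ncardDegree_lineGraph hconn hw hclaw)
      (lineGraph_not_iso_claw G) rfl
    exact ⟨k + 1, by rw [iterLineGraph_succ']; exact hk⟩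

/-- If `G` is a finite connected simple graph which is not a path, not a cycle and not the claw
`K_{1,3}`, then some iterated line graph `L^k(G)` has minimum degree `δ(L^k(G)) ≥ 3`. -/
theorem iterLineGraph_minDegree_ge_three {V : Type u} [Fintype V] (G : SimpleGraph V)
    (hconn : G.Connected)
    (hpath : ¬ ∃ n : ℕ, Nonempty (G ≃g pathGraph n))
    (hcycle : ¬ ∃ n : ℕ, Nonempty (G ≃g cycleGraph n))
    (hclaw : ¬ Nonempty (G ≃g completeBipartiteGraph (Fin 1) (Fin 3))) :
    ∃ k : ℕ, ∀ w : (iterLineGraph G k).1,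
      3 ≤ ((iterLineGraph G k).2.neighborSet w).ncard := by
  have hw : ∃ w, 3 ≤ G.ncardDegree w := by
    by_contra! hdeg
    exact (hconn.nonempty_iso_pathGraph_or_cycleGraph fun v => Nat.le_of_lt_succ (hdeg v)).elim
      hpath hcycle
  exact hconn.exists_iterLineGraph_three_le_ncardDegree hw hclaw
end
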